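/- If 0 < α < 1 and λ ≠ 0, there is no μ ∈ ℂ such that E_α(λ t^α) = e^{μ t} for all t ≥ 0; consequently the fractional evolution t ↦ E_α(λ t^α) does not satisfy the semigroup law g(t+s) = g(t)g(s) unless λ = 0 or α = 1. -/

import Mathlib

/-! `E_α` is the sum of a power series whose coefficients `1 / Γ(αk + 1)` are bounded, so it is
differentiable at `0` with derivative `1 / Γ(α + 1)`; hence
`E_α(λ t^α) = 1 + L t^α + o(t^α)` as `t → 0⁺`, with `L = λ / Γ(α + 1) ≠ 0`.
An exponential `e^{μt} = 1 + O(t)` is `1 + o(t^α)` when `α < 1`, so it cannot agree with it.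
For the semigroup law take `s = t`: then `E_α(λ (2t)^α) - 1 ∼ 2^α L t^α`, while
`E_α(λ t^α)^2 - 1 ∼ 2 L t^α`, which forces `2^α = 2`. -/

/-- The (complex) Mittag–Leffler function `E_α(z)`. -/
noncomputable def mittagLeffler (α : ℝ) (z : ℂ) : ℂ :=
  ∑' k : ℕ, z ^ k / Complex.Gamma (α * k + 1)

open Filter Topology FormalMultilinearSeries

theorem Real.exists_forall_inv_Gamma_le : ∃ C : ℝ, ∀ x : ℝ, 0 < x → (Real.Gamma x)⁻¹ ≤ C := by
  obtain ⟨x₀, hx₀, hmin⟩ := Real.exists_isMinOn_Gamma_Ioi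
  exact ⟨(Real.Gamma x₀)⁻¹, fun x hx =>
    inv_anti₀ (Real.Gamma_pos_of_pos (one_pos.trans hx₀.1)) (hmin hx)⟩

noncomputable def mittagLefflerSeries (α : ℝ) : FormalMultilinearSeries ℂ ℂ ℂ :=
  ofScalars ℂ fun k : ℕ => (Complex.Gamma (α * k + 1))⁻¹

section MittagLeffler

variable {α : ℝ}

theorem mittagLeffler_eq_sum (α : ℝ) : mittagLeffler α = (mittagLefflerSeries α).sum := by
  ext z
  exact (tsum_congr fun k => by rw [smul_eq_mul, div_eq_inv_mul]).trans (ofScalars_sum_eq _ z).symm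

theorem mittagLeffler_zero (α : ℝ) : mittagLeffler α 0 = 1 := by
  simp [mittagLeffler_eq_sum, mittagLefflerSeries, ← ofScalarsSum.eq_def]

theorem one_le_radius_mittagLefflerSeries (hα : 0 ≤ α) : 1 ≤ (mittagLefflerSeries α).radius := by
  obtain ⟨C, hC⟩ := Real.exists_forall_inv_Gamma_le
  refine ENNReal.coe_one ▸ le_radius_of_bound _ C fun k => ?_
  have hk : 0 < α * k + 1 := by positivity
  simpa [mittagLefflerSeries, ← Complex.ofReal_natCast, ← Complex.ofReal_mul,
    ← Complex.ofReal_one, ← Complex.ofReal_add, Complex.Gamma_ofReal,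
    abs_of_pos (Real.Gamma_pos_of_pos hk)] using hC _ hk

theorem hasDerivAt_mittagLeffler_zero (hα : 0 ≤ α) :
    HasDerivAt (mittagLeffler α) (Complex.Gamma (α + 1))⁻¹ 0 := by
  have h := ((mittagLefflerSeries α).hasFPowerSeriesOnBall
    (zero_lt_one.trans_le (one_le_radius_mittagLefflerSeries hα))).hasFPowerSeriesAt.hasDerivAt
  rw [mittagLeffler_eq_sum]
  simpa [mittagLefflerSeries, ofScalars_apply_eq] using h

end MittagLeffler

section RpowNearZero

variable {α : ℝ}

theorem tendsto_rpow_nhdsGT_zero (hα : 0 < α) :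
    Tendsto (fun t : ℝ => t ^ α) (𝓝[>] 0) (𝓝[>] 0) := by
  refine tendsto_nhdsWithin_of_tendsto_nhds_of_eventually_within _ ?_ ?_
  · simpa [Real.zero_rpow hα.ne'] using
      (Real.continuousAt_rpow_const 0 α (Or.inr hα.le)).tendsto.mono_left nhdsWithin_le_nhds
  · filter_upwards [self_mem_nhdsWithin] with t ht using Real.rpow_pos_of_pos ht α

theorem tendsto_ofReal_rpow_nhdsNE_zero (hα : 0 < α) :
    Tendsto (fun t : ℝ => ((t ^ α : ℝ) : ℂ)) (𝓝[>] 0) (𝓝[≠] 0) := by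
  refine tendsto_nhdsWithin_of_tendsto_nhds_of_eventually_within _ ?_ ?_
  · simpa [Function.comp_def] using (Complex.continuous_ofReal.tendsto 0).comp
      ((tendsto_rpow_nhdsGT_zero hα).mono_right nhdsWithin_le_nhds)
  · filter_upwards [(tendsto_rpow_nhdsGT_zero hα) self_mem_nhdsWithin] with t ht
    exact Complex.ofReal_ne_zero.mpr (ne_of_gt ht)

theorem HasDerivAt.tendsto_sub_div_ofReal_rpow {g : ℂ → ℂ} {g' : ℂ} (hg : HasDerivAt g g' 0)
    (hα : 0 < α) :
    Tendsto (fun t : ℝ => (g ((t ^ α : ℝ) : ℂ) - g 0) / ((t ^ α : ℝ) : ℂ)) (𝓝[>] 0) (𝓝 g') := by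
  simpa [div_eq_inv_mul, Function.comp_def] using
    hg.tendsto_slope_zero.comp (tendsto_ofReal_rpow_nhdsNE_zero hα)

theorem HasDerivAt.tendsto_sub_div_rpow_of_lt_one {f : ℝ → ℂ} {f' : ℂ} (hf : HasDerivAt f f' 0)
    (hα : α < 1) :
    Tendsto (fun t : ℝ => (f t - f 0) / ((t ^ α : ℝ) : ℂ)) (𝓝[>] 0) (𝓝 0) := by
  have hpow : Tendsto (fun t : ℝ => ((t ^ (1 - α) : ℝ) : ℂ)) (𝓝[>] 0) (𝓝 0) :=
    (tendsto_ofReal_rpow_nhdsNE_zero (sub_pos.mpr hα)).mono_right nhdsWithin_le_nhds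
  have h := (hf.tendsto_slope_zero.mono_left (nhdsGT_le_nhdsNE 0)).mul hpow
  rw [mul_zero] at h
  refine h.congr' ?_
  filter_upwards [self_mem_nhdsWithin] with t (ht : 0 < t)
  have hrpow : t ^ (1 - α) * t⁻¹ = (t ^ α)⁻¹ := by
    rw [Real.rpow_sub ht, Real.rpow_one, div_mul_eq_mul_div, mul_inv_cancel₀ ht.ne', one_div]
  simp only [zero_add, Complex.real_smul, div_eq_inv_mul]
  rw [mul_comm, ← mul_assoc, ← Complex.ofReal_inv, ← Complex.ofReal_mul, hrpow, Complex.ofReal_inv]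

end RpowNearZero

section Doubling

variable {α : ℝ} {L : ℂ} {φ : ℝ → ℂ}

theorem tendsto_one_of_tendsto_sub_one_div_rpow (hα : 0 < α)
    (hφ : Tendsto (fun t : ℝ => (φ t - 1) / ((t ^ α : ℝ) : ℂ)) (𝓝[>] 0) (𝓝 L)) :
    Tendsto φ (𝓝[>] 0) (𝓝 1) := by
  have h := (hφ.mul ((tendsto_ofReal_rpow_nhdsNE_zero hα).mono_right nhdsWithin_le_nhds)).add_const 1
  rw [mul_zero, zero_add] at h
  refine h.congr' ?_
  filter_upwards [(tendsto_ofReal_rpow_nhdsNE_zero hα) self_mem_nhdsWithin] with t ht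
  rw [div_mul_cancel₀ _ ht, sub_add_cancel]

theorem eq_one_of_tendsto_sub_one_div_rpow_of_map_two_mul (hα : 0 < α) (hL : L ≠ 0)
    (hφ : Tendsto (fun t : ℝ => (φ t - 1) / ((t ^ α : ℝ) : ℂ)) (𝓝[>] 0) (𝓝 L))
    (hsq : ∀ t : ℝ, 0 < t → φ (2 * t) = φ t ^ 2) : α = 1 := by
  have hdouble : Tendsto (fun t : ℝ => 2 * t) (𝓝[>] 0) (𝓝[>] 0) :=
    tendsto_iff_comap.mpr (comap_mulLeft_nhdsGT_zero two_pos).ge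
  have hlhs : Tendsto (fun t : ℝ => (φ (2 * t) - 1) / ((t ^ α : ℝ) : ℂ)) (𝓝[>] 0)
      (𝓝 (((2 : ℝ) ^ α : ℝ) * L)) := by
    refine ((hφ.comp hdouble).const_mul _).congr' ?_
    filter_upwards [self_mem_nhdsWithin] with t (ht : 0 < t)
    rw [Function.comp_apply, Real.mul_rpow zero_le_two ht.le, Complex.ofReal_mul,
      ← mul_div_assoc, mul_div_mul_left _ _ (by exact_mod_cast (Real.rpow_pos_of_pos two_pos α).ne')]
  have hrhs : Tendsto (fun t : ℝ => (φ (2 * t) - 1) / ((t ^ α : ℝ) : ℂ)) (𝓝[>] 0)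
      (𝓝 (L * (1 + 1))) := by
    refine (hφ.mul ((tendsto_one_of_tendsto_sub_one_div_rpow hα hφ).add_const 1)).congr' ?_
    filter_upwards [self_mem_nhdsWithin] with t (ht : 0 < t)
    rw [hsq t ht]
    ring
  have h2 : (((2 : ℝ) ^ α : ℝ) : ℂ) = ((2 : ℝ) : ℂ) := by
    simpa [one_add_one_eq_two, mul_comm L, hL] using tendsto_nhds_unique hlhs hrhs
  simpa using (Real.rpow_right_inj two_pos (by norm_num)).mp
    ((Complex.ofReal_injective h2).trans (Real.rpow_one 2).symm)

end Doubling

/-- For `0 < α < 1` and `λ ≠ 0`, there is no `μ ∈ ℂ` such that `E_α(λ t^α) = e^{μ t}`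
for all `t ≥ 0`; consequently the fractional evolution `t ↦ E_α(λ t^α)` does not
satisfy the semigroup law `g(t+s) = g(t) g(s)` on `t, s ≥ 0`. -/
theorem mittagLeffler_not_semigroup (α : ℝ) (hα : 0 < α) (hα1 : α < 1)
    (lam : ℂ) (hlam : lam ≠ 0) :
    (¬ ∃ μ : ℂ, ∀ t : ℝ, 0 ≤ t →
        mittagLeffler α (lam * ((t ^ α : ℝ) : ℂ)) = Complex.exp (μ * t)) ∧
    ¬ (∀ t s : ℝ, 0 ≤ t → 0 ≤ s →
        mittagLeffler α (lam * (((t + s) ^ α : ℝ) : ℂ)) =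
          mittagLeffler α (lam * ((t ^ α : ℝ) : ℂ)) *
            mittagLeffler α (lam * ((s ^ α : ℝ) : ℂ))) := by
  set L := (Complex.Gamma (α + 1))⁻¹ * lam
  have hΓ : Complex.Gamma (α + 1) ≠ 0 := Complex.Gamma_ne_zero_of_re_pos <| by
    simp only [Complex.add_re, Complex.ofReal_re, Complex.one_re]
    linarith
  have hL : L ≠ 0 := mul_ne_zero (inv_ne_zero hΓ) hlam
  have hslope : Tendsto (fun t : ℝ => (mittagLeffler α (lam * ((t ^ α : ℝ) : ℂ)) - 1) /
      ((t ^ α : ℝ) : ℂ)) (𝓝[>] 0) (𝓝 L) := by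
    have hcomp := (hasDerivAt_mittagLeffler_zero hα.le).comp_of_eq (0 : ℂ)
      (hasDerivAt_const_mul lam) (mul_zero lam).symm
    simpa [mittagLeffler_zero] using hcomp.tendsto_sub_div_ofReal_rpow hα
  refine ⟨fun ⟨μ, hμ⟩ => hL (tendsto_nhds_unique hslope ?_), fun H => hα1.ne ?_⟩
  · have hexp : HasDerivAt (fun t : ℝ => Complex.exp (μ * t)) μ 0 := by
      simpa using ((Complex.ofRealCLM.hasDerivAt (x := 0)).const_mul μ).cexp
    refine (hexp.tendsto_sub_div_rpow_of_lt_one hα1).congr' ?_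
    filter_upwards [self_mem_nhdsWithin] with t (ht : 0 < t)
    simp [hμ t ht.le]
  · refine eq_one_of_tendsto_sub_one_div_rpow_of_map_two_mul hα hL hslope fun t ht => ?_
    rw [two_mul, H t t ht.le ht.le, sq]
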